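/- Let (Q,R) be a quadratic monomial presentation. If C is a circuit (or a vertex) that is neither complete nor cocomplete, then the complex k(B⊙Γ)_C is exact: H_m(k(B⊙Γ)_C) = 0 for all m, except in the trivial case of a vertex e, where the homology is one-dimensional concentrated in degree 0 and spanned by (e,e). In particular, for every circuit C of positive length that is neither complete nor cocomplete, k(B⊙Γ)_C has vanishing homology in all degrees. -/

import Mathlib

/-!
Common framework: quivers, paths (as a start vertex together with a list of
composable arrows, listed in order of traversal, so that the paper's path
`c_m ⋯ c_1` corresponds to the list `[c_1, …, c_m]`), gentle and quadratic
monomial presentations, the cochain complex `k(Γ ∥ B)` and the chain complex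
`k(B ⊙ Γ)` of the paper.
-/

namespace GentleTT

structure Quiv where
  V : Type
  A : Type
  [fintV : Fintype V]
  [fintA : Fintype A]
  [decV : DecidableEq V]
  [decA : DecidableEq A]
  src : A → V
  tgt : A → V

attribute [instance] Quiv.fintV Quiv.fintA Quiv.decV Quiv.decA

/-- A "path datum": a start vertex together with the list of arrows traversed. -/
abbrev PathDat (Q : Quiv) := Q.V × List Q.A

def psrc (Q : Quiv) (p : PathDat Q) : Q.V := p.1

def ptgt (Q : Quiv) (p : PathDat Q) : Q.V := p.2.getLast?.elim p.1 Q.tgt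

def plen (Q : Quiv) (p : PathDat Q) : ℕ := p.2.length

/-- `p` is a genuine path: consecutive arrows compose, and the recorded start
vertex is the source of the first arrow (if any). -/
def Ok (Q : Quiv) (p : PathDat Q) : Prop :=
  p.2.Chain' (fun a b => Q.tgt a = Q.src b) ∧ ∀ a ∈ p.2.head?, Q.src a = p.1

/-- `p` is a path none of whose length-2 subpaths lies in `R`
(an element of the basis `B` of `kQ/⟨R⟩`). -/
def InB (Q : Quiv) (R : Set (Q.A × Q.A)) (p : PathDat Q) : Prop :=
  Ok Q p ∧ p.2.Chain' (fun a b => (a, b) ∉ R)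

/-- `p` is a path all of whose length-2 subpaths lie in `R` (an element of `Γ`). -/
def InG (Q : Quiv) (R : Set (Q.A × Q.A)) (p : PathDat Q) : Prop :=
  Ok Q p ∧ p.2.Chain' (fun a b => (a, b) ∈ R)

/-- Parallel paths: same source and same target. -/
def Par (Q : Quiv) (p q : PathDat Q) : Prop :=
  psrc Q p = psrc Q q ∧ ptgt Q p = ptgt Q q

/-- Antiparallel paths: `s(p) = t(q)` and `t(p) = s(q)`. -/
def AntiPar (Q : Quiv) (p q : PathDat Q) : Prop :=
  psrc Q p = ptgt Q q ∧ ptgt Q p = psrc Q q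

/-- A cycle: a path of positive length whose source equals its target. -/
def IsCycle (Q : Quiv) (p : PathDat Q) : Prop :=
  Ok Q p ∧ p.2 ≠ [] ∧ psrc Q p = ptgt Q p

/-- Rotation of a cycle: the paper's `rot (c_m ⋯ c_1) = c_{m-1} ⋯ c_1 c_m`
(the last arrow traversed becomes the first one traversed). -/
def rotP (Q : Quiv) (p : PathDat Q) : PathDat Q :=
  match p.2.getLast? with
  | none => p
  | some a => (Q.src a, a :: p.2.dropLast)

/-- Iterated rotation `rot^i`. -/
def rotI (Q : Quiv) (i : ℕ) (p : PathDat Q) : PathDat Q := (rotP Q)^[i] p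

def powL {α : Type} (l : List α) : ℕ → List α
  | 0 => []
  | n + 1 => l ++ powL l n

/-- The `n`-th power `p^n` of a (cyclic) path. -/
def powP (Q : Quiv) (p : PathDat Q) (n : ℕ) : PathDat Q := (p.1, powL p.2 n)

/-- A primitive cycle: a cycle that is not a proper power of another cycle. -/
def IsPrimitive (Q : Quiv) (p : PathDat Q) : Prop :=
  IsCycle Q p ∧ ∀ (q : PathDat Q) (n : ℕ), IsCycle Q q → 2 ≤ n → p ≠ powP Q q n

/-- The period of a cycle: the least `i ≥ 1` with `rot^i p = p`. -/
noncomputable def periodP (Q : Quiv) (p : PathDat Q) : ℕ :=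
  sInf {i : ℕ | 1 ≤ i ∧ rotI Q i p = p}

/-- Two cycles are conjugate (belong to the same circuit) if one is obtained
from the other by iterated rotation. -/
def RotEquiv (Q : Quiv) (p q : PathDat Q) : Prop := ∃ i : ℕ, rotI Q i p = q

/-- A cocomplete cycle: `p² ∈ B`. -/
def Cocomplete (Q : Quiv) (R : Set (Q.A × Q.A)) (p : PathDat Q) : Prop :=
  IsCycle Q p ∧ InB Q R (powP Q p 2)

/-- A complete cycle: `p² ∈ Γ`. -/
def Complete (Q : Quiv) (R : Set (Q.A × Q.A)) (p : PathDat Q) : Prop :=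
  IsCycle Q p ∧ InG Q R (powP Q p 2)

/-- `B`-maximal path: in `B` and not a proper subpath of another element of `B`. -/
def BMax (Q : Quiv) (R : Set (Q.A × Q.A)) (p : PathDat Q) : Prop :=
  InB Q R p ∧ ∀ q : PathDat Q, InB Q R q → p.2 <:+: q.2 → p.2 = q.2

/-- `Γ`-maximal path: in `Γ` and not a proper subpath of another element of `Γ`. -/
def GMax (Q : Quiv) (R : Set (Q.A × Q.A)) (p : PathDat Q) : Prop :=
  InG Q R p ∧ ∀ q : PathDat Q, InG Q R q → p.2 <:+: q.2 → p.2 = q.2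

def Adj (Q : Quiv) (v w : Q.V) : Prop :=
  ∃ a : Q.A, (Q.src a = v ∧ Q.tgt a = w) ∨ (Q.src a = w ∧ Q.tgt a = v)

/-- Connectedness of the underlying graph of the quiver. -/
def Connected (Q : Quiv) : Prop := ∀ v w : Q.V, Relation.ReflTransGen (Adj Q) v w

/-- A quadratic monomial presentation: the relations are paths of length 2. -/
def IsQuadMon (Q : Quiv) (R : Set (Q.A × Q.A)) : Prop :=
  ∀ r ∈ R, Q.tgt r.1 = Q.src r.2

/-- A gentle presentation. -/
structure IsGentle (Q : Quiv) (R : Set (Q.A × Q.A)) : Prop where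
  nonempty : Nonempty Q.V
  connected : Connected Q
  relComposable : ∀ r ∈ R, Q.tgt r.1 = Q.src r.2
  srcLe : ∀ v : Q.V, {a : Q.A | Q.src a = v}.ncard ≤ 2
  tgtLe : ∀ v : Q.V, {a : Q.A | Q.tgt a = v}.ncard ≤ 2
  uniqNotRelAfter : ∀ a : Q.A, {b : Q.A | Q.tgt a = Q.src b ∧ (a, b) ∉ R}.Subsingleton
  uniqNotRelBefore : ∀ a : Q.A, {c : Q.A | Q.tgt c = Q.src a ∧ (c, a) ∉ R}.Subsingleton
  uniqRelAfter : ∀ a : Q.A, {b : Q.A | Q.tgt a = Q.src b ∧ (a, b) ∈ R}.Subsingleton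
  uniqRelBefore : ∀ a : Q.A, {c : Q.A | Q.tgt c = Q.src a ∧ (c, a) ∈ R}.Subsingleton

/-- A spanning tree of the (finite, connected) quiver `Q`: a set of arrows
which connects all vertices and has exactly `|Q₀| - 1` elements. -/
def IsSpanningTree (Q : Quiv) (T : Set Q.A) : Prop :=
  (∀ v w : Q.V, Relation.ReflTransGen
      (fun x y => ∃ a ∈ T, (Q.src a = x ∧ Q.tgt a = y) ∨ (Q.src a = y ∧ Q.tgt a = x)) v w) ∧
  T.ncard + 1 = Fintype.card Q.V

/-- A set of representatives, one for each rotation class of cycles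
satisfying `Pred`. -/
def IsRepSet (Q : Quiv) (P : Set (PathDat Q)) (Pred : PathDat Q → Prop) : Prop :=
  (∀ p ∈ P, Pred p) ∧ ∀ q : PathDat Q, Pred q → ∃! p, p ∈ P ∧ RotEquiv Q q p

/-- `S` is a valid choice of the paper's set `Crep` for the predicate `Pred`
(e.g. cocompleteness, or completeness): it consists of all positive powers of a
chosen set of representatives of the rotation classes of primitive cycles
satisfying `Pred`. -/
def IsCrep (Q : Quiv) (S : Set (PathDat Q)) (Pred : PathDat Q → Prop) : Prop :=
  ∃ P : Set (PathDat Q),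
    IsRepSet Q P (fun p => IsPrimitive Q p ∧ Pred p) ∧
    S = {x | ∃ p ∈ P, ∃ n : ℕ, 1 ≤ n ∧ x = powP Q p n}

/-! ### The cochain complex `k(Γ ∥ B)` -/

/-- Membership in the degree-`m` basis `Γ_m ∥ B` of the cochain complex. -/
def GBmem (Q : Quiv) (R : Set (Q.A × Q.A)) (m : ℕ) (x : PathDat Q × PathDat Q) : Prop :=
  InG Q R x.1 ∧ plen Q x.1 = m ∧ InB Q R x.2 ∧ Par Q x.1 x.2

abbrev GB (Q : Quiv) (R : Set (Q.A × Q.A)) (m : ℕ) :=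
  {x : PathDat Q × PathDat Q // GBmem Q R m x}

/-- The degree-`m` component of the cochain complex `k(Γ ∥ B)`. -/
abbrev Coch (k : Type) [Field k] (Q : Quiv) (R : Set (Q.A × Q.A)) (m : ℕ) :=
  GB Q R m →₀ k

/-- The basis vector of `k(Γ_m ∥ B)` attached to a raw pair of path data
(and `0` if the pair is not in `Γ_m ∥ B`). -/
noncomputable def bv (k : Type) [Field k] (Q : Quiv) (R : Set (Q.A × Q.A)) (m : ℕ)
    (x : PathDat Q × PathDat Q) : Coch k Q R m := by
  classical
  exact if h : GBmem Q R m x then Finsupp.single (⟨x, h⟩ : GB Q R m) (1 : k) else 0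

/-- Extension on the left (in the paper's notation): `p ↦ b p`. -/
def extL (Q : Quiv) (b : Q.A) (p : PathDat Q) : PathDat Q := (p.1, p.2 ++ [b])

/-- Extension on the right (in the paper's notation): `p ↦ p a`. -/
def extR (Q : Quiv) (a : Q.A) (p : PathDat Q) : PathDat Q := (Q.src a, a :: p.2)

/-- The differential on a basis element:
`d^m (γ, α) = Σ_b (bγ, bα) - (-1)^m Σ_a (γa, αa)`. -/
noncomputable def dB (k : Type) [Field k] (Q : Quiv) (R : Set (Q.A × Q.A)) (m : ℕ)
    (x : GB Q R m) : Coch k Q R (m + 1) := by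
  classical
  exact
    (∑ b : Q.A,
      if h : GBmem Q R (m + 1) (extL Q b x.val.1, extL Q b x.val.2) then
        Finsupp.single (⟨_, h⟩ : GB Q R (m + 1)) (1 : k) else 0)
    - ((-1 : k) ^ m) •
      (∑ a : Q.A,
        if h : Q.tgt a = psrc Q x.val.1 ∧
            GBmem Q R (m + 1) (extR Q a x.val.1, extR Q a x.val.2) then
          Finsupp.single (⟨_, h.2⟩ : GB Q R (m + 1)) (1 : k) else 0)

/-- The differential `d^m : k(Γ_m ∥ B) → k(Γ_{m+1} ∥ B)`. -/
noncomputable def dLin (k : Type) [Field k] (Q : Quiv) (R : Set (Q.A × Q.A)) (m : ℕ) :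
    Coch k Q R m →ₗ[k] Coch k Q R (m + 1) :=
  Finsupp.linearCombination k (dB k Q R m)

/-- The element `𝟙 = Σ_{i ∈ Q₀} (e_i, e_i)` (placed in degree `m`; it is the
intended element when `m = 0`). -/
noncomputable def oneD (k : Type) [Field k] (Q : Quiv) (R : Set (Q.A × Q.A)) (m : ℕ) :
    Coch k Q R m :=
  ∑ i : Q.V, bv k Q R m ((i, []), (i, []))

/-- `⟨α⟩ = Σ_{i=0}^{r-1} (s(rot^i α), rot^i α)`, `r` the period of `α`. -/
noncomputable def cycB (k : Type) [Field k] (Q : Quiv) (R : Set (Q.A × Q.A)) (m : ℕ)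
    (α : PathDat Q) : Coch k Q R m :=
  ∑ i ∈ Finset.range (periodP Q α),
    bv k Q R m ((psrc Q (rotI Q i α), []), rotI Q i α)

/-- `⟨C⟩ = Σ_{i=0}^{r-1} (-1)^{i m} (rot^i C, s(rot^i C))`, `r` the period of `C`. -/
noncomputable def cycG (k : Type) [Field k] (Q : Quiv) (R : Set (Q.A × Q.A)) (m : ℕ)
    (C : PathDat Q) : Coch k Q R m :=
  ∑ i ∈ Finset.range (periodP Q C),
    ((-1 : k) ^ (i * m)) • bv k Q R m (rotI Q i C, (psrc Q (rotI Q i C), []))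

/-- The coboundary subspace in degree `m` (zero in degree `0`). -/
noncomputable def cobSp (k : Type) [Field k] (Q : Quiv) (R : Set (Q.A × Q.A)) :
    (m : ℕ) → Submodule k (Coch k Q R m)
  | 0 => ⊥
  | m + 1 => LinearMap.range (dLin k Q R m)

/-- The cocycle subspace in degree `m`. -/
noncomputable def cocSp (k : Type) [Field k] (Q : Quiv) (R : Set (Q.A × Q.A)) (m : ℕ) :
    Submodule k (Coch k Q R m) :=
  LinearMap.ker (dLin k Q R m)

/-- The degree-`m` cohomology `HH^m` of the complex `k(Γ ∥ B)` vanishes: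
every cocycle is a coboundary. -/
def CohomIsZero (k : Type) [Field k] (Q : Quiv) (R : Set (Q.A × Q.A)) (m : ℕ) : Prop :=
  cocSp k Q R m ≤ cobSp k Q R m

/-- The degree-`m` cohomology `HH^m` of the complex `k(Γ ∥ B)` is
finite-dimensional: there is a finite set of cocycles whose classes span it. -/
def CohomFinDim (k : Type) [Field k] (Q : Quiv) (R : Set (Q.A × Q.A)) (m : ℕ) : Prop :=
  ∃ G : Finset (Coch k Q R m), ↑G ⊆ (cocSp k Q R m : Set (Coch k Q R m)) ∧
    cocSp k Q R m ≤ cobSp k Q R m ⊔ Submodule.span k ↑G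

/-- The degree-`m` cohomology `HH^m` of the complex `k(Γ ∥ B)` has dimension at
most `n`: there are `n` cocycles whose classes span it. -/
def CohomDimLe (k : Type) [Field k] (Q : Quiv) (R : Set (Q.A × Q.A)) (m n : ℕ) : Prop :=
  ∃ G : Finset (Coch k Q R m), G.card ≤ n ∧
    ↑G ⊆ (cocSp k Q R m : Set (Coch k Q R m)) ∧
    cocSp k Q R m ≤ cobSp k Q R m ⊔ Submodule.span k ↑G

/-- `Gen` is a basis of the kernel of `d⁰`, i.e. it freely generates `HH⁰`. -/
def FreelyGeneratesKer0 (k : Type) [Field k] (Q : Quiv) (R : Set (Q.A × Q.A))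
    (Gen : Set (Coch k Q R 0)) : Prop :=
  (∀ x ∈ Gen, dLin k Q R 0 x = 0) ∧
  (∀ z : Coch k Q R 0, dLin k Q R 0 z = 0 → z ∈ Submodule.span k Gen) ∧
  LinearIndependent k (fun x : Gen => (x : Coch k Q R 0))

/-- The cohomology classes of the elements of `Gen` freely generate the
degree-`(m+1)` cohomology of `k(Γ ∥ B)`: all elements of `Gen` are cocycles,
every cocycle is congruent to an element of their span modulo coboundaries, no
nonzero element of their span is a coboundary, and `Gen` is linearly
independent. -/
def FreelyGeneratesCohom (k : Type) [Field k] (Q : Quiv) (R : Set (Q.A × Q.A)) (m : ℕ)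
    (Gen : Set (Coch k Q R (m + 1))) : Prop :=
  (∀ x ∈ Gen, dLin k Q R (m + 1) x = 0) ∧
  (∀ z : Coch k Q R (m + 1), dLin k Q R (m + 1) z = 0 →
      ∃ y : Coch k Q R m, z - dLin k Q R m y ∈ Submodule.span k Gen) ∧
  (∀ x ∈ Submodule.span k Gen, x ∈ LinearMap.range (dLin k Q R m) → x = 0) ∧
  LinearIndependent k (fun x : Gen => (x : Coch k Q R (m + 1)))

/-! ### The chain complex `k(B ⊙ Γ)` -/

/-- Membership in the degree-`m` basis `B ⊙ Γ_m` of the chain complex. -/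
def BGmem (Q : Quiv) (R : Set (Q.A × Q.A)) (m : ℕ) (x : PathDat Q × PathDat Q) : Prop :=
  InB Q R x.1 ∧ InG Q R x.2 ∧ plen Q x.2 = m ∧ AntiPar Q x.1 x.2

abbrev BGt (Q : Quiv) (R : Set (Q.A × Q.A)) (m : ℕ) :=
  {x : PathDat Q × PathDat Q // BGmem Q R m x}

/-- The degree-`m` component of the chain complex `k(B ⊙ Γ)`. -/
abbrev Chn (k : Type) [Field k] (Q : Quiv) (R : Set (Q.A × Q.A)) (m : ℕ) :=
  BGt Q R m →₀ k

/-- The basis vector of `k(B ⊙ Γ_m)` attached to a raw pair of path data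
(and `0` if the pair is not in `B ⊙ Γ_m`). -/
noncomputable def bw (k : Type) [Field k] (Q : Quiv) (R : Set (Q.A × Q.A)) (m : ℕ)
    (x : PathDat Q × PathDat Q) : Chn k Q R m := by
  classical
  exact if h : BGmem Q R m x then Finsupp.single (⟨x, h⟩ : BGt Q R m) (1 : k) else 0

/-- `l1(p)`: the last arrow of `p` (as a path of length one). -/
def l1P (Q : Quiv) (p : PathDat Q) : PathDat Q :=
  match p.2.getLast? with
  | none => p
  | some a => (Q.src a, [a])

/-- `l2(p)`: `p` with its last arrow removed. -/
def l2P (Q : Quiv) (p : PathDat Q) : PathDat Q := (p.1, p.2.dropLast)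

/-- `r1(p)`: `p` with its first arrow removed. -/
def r1P (Q : Quiv) (p : PathDat Q) : PathDat Q :=
  match p.2 with
  | [] => p
  | a :: l => (Q.tgt a, l)

/-- `r2(p)`: the first arrow of `p` (as a path of length one). -/
def r2P (Q : Quiv) (p : PathDat Q) : PathDat Q :=
  match p.2 with
  | [] => p
  | a :: _ => (Q.src a, [a])

/-- The raw first term `(α·l1(γ), l2(γ))` of the boundary of `(α, γ)`. -/
def d1raw (Q : Quiv) (x : PathDat Q × PathDat Q) : PathDat Q × PathDat Q :=
  match x.2.2.getLast? with
  | none => x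
  | some a => ((Q.src a, a :: x.1.2), (x.2.1, x.2.2.dropLast))

/-- The raw second term `(r2(γ)·α, r1(γ))` of the boundary of `(α, γ)`. -/
def d2raw (Q : Quiv) (x : PathDat Q × PathDat Q) : PathDat Q × PathDat Q :=
  match x.2.2 with
  | [] => x
  | c :: l => ((x.1.1, x.1.2 ++ [c]), (Q.tgt c, l))

/-- The boundary of a basis element:
`d_m (α, γ) = (α·l1(γ), l2(γ)) + (-1)^m (r2(γ)·α, r1(γ))` (in degree `m = m+1`),
where pairs whose first component is not in `B` are interpreted as `0`. -/
noncomputable def bdB (k : Type) [Field k] (Q : Quiv) (R : Set (Q.A × Q.A)) (m : ℕ)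
    (x : BGt Q R (m + 1)) : Chn k Q R m :=
  bw k Q R m (d1raw Q x.val) + ((-1 : k) ^ (m + 1)) • bw k Q R m (d2raw Q x.val)

/-- The boundary map `d_{m+1} : k(B ⊙ Γ_{m+1}) → k(B ⊙ Γ_m)`. -/
noncomputable def bd (k : Type) [Field k] (Q : Quiv) (R : Set (Q.A × Q.A)) (m : ℕ) :
    Chn k Q R (m + 1) →ₗ[k] Chn k Q R m :=
  Finsupp.linearCombination k (bdB k Q R m)

/-- The subspace of cycles in degree `m` (everything in degree `0`). -/
noncomputable def ZSp (k : Type) [Field k] (Q : Quiv) (R : Set (Q.A × Q.A)) :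
    (m : ℕ) → Submodule k (Chn k Q R m)
  | 0 => ⊤
  | m + 1 => LinearMap.ker (bd k Q R m)

/-- The subspace of boundaries in degree `m`. -/
noncomputable def BSp (k : Type) [Field k] (Q : Quiv) (R : Set (Q.A × Q.A)) (m : ℕ) :
    Submodule k (Chn k Q R m) :=
  LinearMap.range (bd k Q R m)

/-- The degree-`m` homology `HH_m` of the complex `k(B ⊙ Γ)` vanishes:
every cycle is a boundary. -/
def HomIsZero (k : Type) [Field k] (Q : Quiv) (R : Set (Q.A × Q.A)) (m : ℕ) : Prop :=
  ZSp k Q R m ≤ BSp k Q R m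

/-- The degree-`m` homology `HH_m` of the complex `k(B ⊙ Γ)` is
finite-dimensional: there is a finite set of cycles whose classes span it. -/
def HomFinDim (k : Type) [Field k] (Q : Quiv) (R : Set (Q.A × Q.A)) (m : ℕ) : Prop :=
  ∃ G : Finset (Chn k Q R m), ↑G ⊆ (ZSp k Q R m : Set (Chn k Q R m)) ∧
    ZSp k Q R m ≤ BSp k Q R m ⊔ Submodule.span k ↑G

/-- The concatenation `α γ` of an antiparallel pair (a cycle, or a trivial path). -/
def concatP (Q : Quiv) (x : PathDat Q × PathDat Q) : PathDat Q := (x.2.1, x.2.2 ++ x.1.2)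

/-- The degree-`m` component of the subcomplex `k(B ⊙ Γ)_C`, spanned by the
basis elements whose concatenation lies in the circuit (rotation class) of `c`. -/
noncomputable def Wsp (k : Type) [Field k] (Q : Quiv) (R : Set (Q.A × Q.A))
    (c : PathDat Q) (m : ℕ) : Submodule k (Chn k Q R m) :=
  Submodule.span k {z : Chn k Q R m |
    ∃ x : BGt Q R m, RotEquiv Q (concatP Q x.val) c ∧ z = Finsupp.single x (1 : k)}

/-- The boundaries of the subcomplex `k(B ⊙ Γ)_C` in degree `m`. -/
noncomputable def WB (k : Type) [Field k] (Q : Quiv) (R : Set (Q.A × Q.A))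
    (c : PathDat Q) (m : ℕ) : Submodule k (Chn k Q R m) :=
  Submodule.map (bd k Q R m) (Wsp k Q R c (m + 1))

/-- The cycles of the subcomplex `k(B ⊙ Γ)_C` in degree `m`. -/
noncomputable def WZ (k : Type) [Field k] (Q : Quiv) (R : Set (Q.A × Q.A))
    (c : PathDat Q) (m : ℕ) : Submodule k (Chn k Q R m) :=
  ZSp k Q R m ⊓ Wsp k Q R c m

/-- The degree-`m` homology of `k(B ⊙ Γ)_C` is one-dimensional, spanned by the
homology class of `v`. -/
def SubHomSpannedBy (k : Type) [Field k] (Q : Quiv) (R : Set (Q.A × Q.A))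
    (c : PathDat Q) (m : ℕ) (v : Chn k Q R m) : Prop :=
  v ∈ WZ k Q R c m ∧ v ∉ WB k Q R c m ∧
  ∀ z ∈ WZ k Q R c m, ∃ t : k, z - t • v ∈ WB k Q R c m

/-- `ĥ(c) = Σ_{i=0}^{r-1} (r1(rot^i c), r2(rot^i c))` (degree 1, for cocomplete cycles;
placed in degree `m`). -/
noncomputable def hCycR (k : Type) [Field k] (Q : Quiv) (R : Set (Q.A × Q.A)) (m : ℕ)
    (c : PathDat Q) : Chn k Q R m :=
  ∑ i ∈ Finset.range (periodP Q c),
    bw k Q R m (r1P Q (rotI Q i c), r2P Q (rotI Q i c))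

/-- `ĥ(c) = Σ_{i=0}^{r-1} (-1)^{(m+1) i} (s(rot^i c), rot^i c)` (degree `m`, for
complete cycles of length `m`). -/
noncomputable def hCycM (k : Type) [Field k] (Q : Quiv) (R : Set (Q.A × Q.A)) (m : ℕ)
    (c : PathDat Q) : Chn k Q R m :=
  ∑ i ∈ Finset.range (periodP Q c),
    ((-1 : k) ^ ((m + 1) * i)) • bw k Q R m ((psrc Q (rotI Q i c), []), rotI Q i c)

/-- The homology classes of the elements of `Gen` freely generate the degree-`m`
homology of `k(B ⊙ Γ)`. -/
def FreelyGeneratesHom (k : Type) [Field k] (Q : Quiv) (R : Set (Q.A × Q.A)) (m : ℕ)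
    (Gen : Set (Chn k Q R m)) : Prop :=
  (∀ x ∈ Gen, x ∈ ZSp k Q R m) ∧
  (∀ z ∈ ZSp k Q R m, ∃ y : Chn k Q R (m + 1), z - bd k Q R m y ∈ Submodule.span k Gen) ∧
  (∀ x ∈ Submodule.span k Gen, x ∈ LinearMap.range (bd k Q R m) → x = 0) ∧
  LinearIndependent k (fun x : Gen => (x : Chn k Q R m))

/-!
A basis element `(α, γ)` of `k(B ⊙ Γ)_C` is a closed path `w = α γ` of `C` cut after its
first `|γ|` arrows, and the cut is admissible iff every adjacent pair inside `γ` lies in `R`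
and none inside `α` does. The map `h (a α', γ) = ± (α', γ a)`, which moves the last arrow of
`α` to the start of `γ`, is a contracting homotopy of `k(B ⊙ Γ)_C` as soon as the cyclic pairs
of `C` are neither all in `R` nor all outside `R`, which is what "neither complete nor
cocomplete" means. Checking `d h + h d = id` on a basis element reduces to deciding which cut
positions of a non-constant periodic predicate on pair positions are admissible. For a vertex
the complex is `k · (e, e)`, concentrated in degree `0`.
-/

section CutValid

variable {p : ℕ → Prop} {L n : ℕ}

/-- Cutting a closed path of length `L`, whose `i`-th adjacent pair (read cyclically) is in `R`
iff `p i`, after its first `n` arrows yields a basis element of `B ⊙ Γ_n` (`bgmem_cut_iff`). -/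
def CutValid (p : ℕ → Prop) (L n : ℕ) : Prop :=
  n ≤ L ∧ (∀ i, i + 1 < n → p i) ∧ ∀ i, n ≤ i → i + 1 < L → ¬ p i

lemma cutValid_add_two_iff_zero (hlt : n + 1 < L)
    (hx : CutValid (fun i => p (i + 1)) L (n + 1)) : CutValid p L (n + 2) ↔ p 0 := by
  obtain ⟨-, hγ, hα⟩ := hx
  refine ⟨fun h => h.2.1 0 (by omega), fun h0 => ⟨hlt, fun i hi => ?_, fun i hi hi' => ?_⟩⟩
  · rcases i with _ | i
    exacts [h0, hγ i (by omega)]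
  · obtain ⟨j, rfl⟩ : ∃ j, i = j + 1 := ⟨i - 1, by omega⟩
    exact hα j (by omega) (by omega)

lemma cutValid_add_two_iff (hper : p L ↔ p 0)
    (hx : CutValid (fun i => p (i + 1)) L (n + 1)) :
    CutValid (fun i => p (i + 2)) L n ↔ ¬ CutValid p L (n + 2) := by
  obtain ⟨hle, hγ, hα⟩ := hx
  rcases Nat.lt_or_ge (n + 1) L with hlt | hge
  · rw [cutValid_add_two_iff_zero hlt ⟨hle, hγ, hα⟩, ← hper]
    refine ⟨fun h => ?_, fun hL => ⟨by omega, fun i hi => hγ (i + 1) (by omega),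
      fun i hi hi' => ?_⟩⟩
    · have : ¬ p (L - 2 + 2) := h.2.2 (L - 2) (by omega) (by omega)
      rwa [show L - 2 + 2 = L by omega] at this
    · rcases Nat.lt_or_ge (i + 2) L with hi₂ | hi₂
      · exact hα (i + 1) (by omega) hi₂
      · show ¬ p (i + 2)
        rwa [show i + 2 = L by omega]
  · obtain rfl : L = n + 1 := by omega
    exact ⟨fun _ h => absurd h.1 (by omega),
      fun _ => ⟨by omega, fun i hi => hγ (i + 1) (by omega), fun i hi hi' => by omega⟩⟩

lemma add_one_lt_of_cutValid (hall : ¬ ∀ i < L, p i) (hnone : ¬ ∀ i < L, ¬ p i)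
    (hx : CutValid (fun i => p (i + 1)) L (n + 1)) (h : CutValid p L (n + 1)) : n + 1 < L := by
  by_contra hge
  refine hall fun i hi => ?_
  rcases i with _ | i
  · rcases Nat.eq_zero_or_pos n with rfl | hn
    · by_contra h0
      exact hnone fun j hj => (show j = 0 by omega) ▸ h0
    · exact h.2.1 0 (by omega)
  · exact hx.2.1 i (by omega)

lemma cutValid_add_two_iff_of_cutValid (hall : ¬ ∀ i < L, p i) (hnone : ¬ ∀ i < L, ¬ p i)
    (hx : CutValid (fun i => p (i + 1)) L (n + 1)) (h : CutValid p L (n + 1)) :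
    CutValid p L (n + 2) ↔ CutValid (fun i => p (i + 1)) L n := by
  have hlt := add_one_lt_of_cutValid hall hnone hx h
  obtain ⟨hle, hγ, hα⟩ := hx
  obtain ⟨-, h₀, h₁⟩ := h
  have hright : CutValid (fun i => p (i + 1)) L n ↔ ¬ p (n + 1) := by
    refine ⟨fun h => h.2.2 n le_rfl hlt, fun hn => ⟨by omega, fun i hi => hγ i (by omega),
      fun i hi hi' => ?_⟩⟩
    rcases Nat.eq_or_lt_of_le hi with rfl | hi
    exacts [hn, hα i hi hi']
  rw [cutValid_add_two_iff_zero hlt ⟨hle, hγ, hα⟩, hright]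
  constructor
  · intro h0 hn1
    rcases Nat.lt_or_ge (n + 2) L with hlt₂ | hge₂
    · exact h₁ (n + 1) le_rfl hlt₂ hn1
    · refine hall fun i hi => ?_
      rcases i with _ | i
      · exact h0
      · rcases Nat.lt_or_ge i n with hin | hin
        · exact hγ i (by omega)
        · rwa [show i = n by omega]
  · intro hn1
    rcases Nat.eq_zero_or_pos n with rfl | hn
    · by_contra h0
      refine hnone fun i hi => ?_
      rcases i with _ | j
      · exact h0
      · rcases Nat.eq_zero_or_pos j with rfl | hj
        · exact hn1
        · exact hα j (by omega) hi
    · exact h₀ 0 (by omega)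

lemma cutValid_one_of_cutValid_zero (hall : ¬ ∀ i < L, p i) (hnone : ¬ ∀ i < L, ¬ p i)
    (hx : CutValid (fun i => p (i + 1)) L 0) : CutValid p L 1 ∧ ¬ CutValid p L 0 := by
  obtain ⟨-, -, hα⟩ := hx
  have hp0 : p 0 := by
    by_contra h0
    refine hnone fun i hi => ?_
    rcases i with _ | i
    exacts [h0, hα i (Nat.zero_le _) hi]
  have hL : 1 < L := by
    by_contra hL
    exact hall fun i hi => (show i = 0 by omega) ▸ hp0
  refine ⟨⟨by omega, fun i hi => by omega, fun i hi hi' => ?_⟩,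
    fun h => h.2.2 0 le_rfl hL hp0⟩
  obtain ⟨i', rfl⟩ : ∃ i', i = i' + 1 := ⟨i - 1, by omega⟩
  exact hα i' (Nat.zero_le _) (by omega)

end CutValid

section CycRel

variable {α : Type*} (R : Set (α × α)) {l : List α} {i n : ℕ}

def CycRel (l : List α) (i : ℕ) : Prop :=
  ∀ h : 0 < l.length,
    (l[i % l.length]'(Nat.mod_lt _ h), l[(i + 1) % l.length]'(Nat.mod_lt _ h)) ∈ R

def IsMixed (l : List α) : Prop := (∃ i, CycRel R l i) ∧ ∃ i, ¬ CycRel R l i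

variable {R}

lemma cycRel_mod : CycRel R l (i % l.length) ↔ CycRel R l i := by
  simp only [CycRel, Nat.mod_mod, Nat.mod_add_mod]

lemma cycRel_add_length : CycRel R l (i + l.length) ↔ CycRel R l i := by
  simp only [CycRel, Nat.add_mod_right, Nat.add_right_comm i l.length 1]

lemma cycRel_rotate (k : ℕ) : CycRel R (l.rotate k) i ↔ CycRel R l (i + k) := by
  simp only [CycRel, List.length_rotate, List.getElem_rotate, Nat.mod_add_mod,
    Nat.add_right_comm i 1 k]

lemma cycRel_iff_of_lt (h : i + 1 < l.length) : CycRel R l i ↔ (l[i], l[i + 1]) ∈ R := by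
  simp only [CycRel, Nat.mod_eq_of_lt h, Nat.mod_eq_of_lt (Nat.lt_of_succ_lt h)]
  exact ⟨fun H => H (by omega), fun H _ => H⟩

lemma isChain_take_iff (hn : n ≤ l.length) :
    (l.take n).IsChain (fun a b => (a, b) ∈ R) ↔ ∀ i, i + 1 < n → CycRel R l i := by
  rw [List.isChain_iff_getElem]
  simp only [List.length_take, List.getElem_take]
  refine ⟨fun H i hi => (cycRel_iff_of_lt (by omega)).2 (H i (by omega)),
    fun H i hi => (cycRel_iff_of_lt (by omega)).1 (H i (by omega))⟩

lemma isChain_drop_iff :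
    (l.drop n).IsChain (fun a b => (a, b) ∉ R) ↔
      ∀ i, n ≤ i → i + 1 < l.length → ¬ CycRel R l i := by
  rw [List.isChain_iff_getElem]
  simp only [List.length_drop, List.getElem_drop]
  refine ⟨fun H i hi hi' => ?_, fun H i hi => ?_⟩
  · obtain ⟨j, rfl⟩ : ∃ j, i = n + j := ⟨i - n, by omega⟩
    rw [cycRel_iff_of_lt hi']
    simpa only [Nat.add_assoc] using H j (by omega)
  · have := H (n + i) (by omega) (by omega)
    rw [cycRel_iff_of_lt (by omega)] at this
    simpa only [Nat.add_assoc] using this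

lemma isChain_append_self (hl : l ≠ []) (H : ∀ i, CycRel R l i) :
    (l ++ l).IsChain (fun a b => (a, b) ∈ R) := by
  have hchain : l.IsChain (fun a b => (a, b) ∈ R) := by
    simpa using (isChain_take_iff (R := R) (n := l.length) le_rfl).2 fun i _ => H i
  refine hchain.append hchain fun a ha b hb => ?_
  have hpos : 0 < l.length := List.length_pos_iff.2 hl
  have := H (l.length - 1) hpos
  rw [List.getLast?_eq_getElem?, List.getElem?_eq_getElem (by omega), Option.mem_some_iff] at ha
  rw [List.head?_eq_getElem?, List.getElem?_eq_getElem hpos, Option.mem_some_iff] at hb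
  simp only [Nat.mod_eq_of_lt (Nat.sub_lt hpos Nat.one_pos), Nat.sub_add_cancel hpos,
    Nat.mod_self, ha, hb] at this
  exact this

lemma isMixed_rotate_iff (k : ℕ) : IsMixed R (l.rotate k) ↔ IsMixed R l := by
  have key : ∀ i, CycRel R (l.rotate k) i ↔ CycRel R l (i + k) := fun _ => cycRel_rotate k
  rcases Nat.eq_zero_or_pos l.length with h0 | hpos
  · obtain rfl := List.length_eq_zero_iff.1 h0
    simp
  constructor
  · rintro ⟨⟨i, hi⟩, ⟨j, hj⟩⟩
    exact ⟨⟨_, (key i).1 hi⟩, ⟨_, fun h => hj ((key j).2 h)⟩⟩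
  · rintro ⟨⟨i, hi⟩, ⟨j, hj⟩⟩
    have shift : ∀ i, CycRel R l i ↔ CycRel R (l.rotate k) (i + l.length * k - k) := fun i => by
      rw [key, Nat.sub_add_cancel (le_add_left (Nat.le_mul_of_pos_left k hpos)),
        ← cycRel_mod (i := i + _), Nat.add_mul_mod_self_left, cycRel_mod]
    exact ⟨⟨_, (shift i).1 hi⟩, ⟨_, fun h => hj ((shift j).2 h)⟩⟩

lemma IsMixed.not_forall_lt (h : IsMixed R l) :
    (¬ ∀ i < l.length, CycRel R l i) ∧ ¬ ∀ i < l.length, ¬ CycRel R l i := by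
  obtain ⟨⟨i, hi⟩, ⟨j, hj⟩⟩ := h
  have hpos : 0 < l.length := List.length_pos_iff.2 fun hl => hj fun h => by simp [hl] at h
  exact ⟨fun H => hj (cycRel_mod.1 (H _ (Nat.mod_lt j hpos))),
    fun H => H _ (Nat.mod_lt i hpos) (cycRel_mod.2 hi)⟩

lemma cycRel_compl_iff {S : Set (α × α)} (hl : l ≠ []) :
    CycRel Sᶜ l i ↔ ¬ CycRel S l i := by
  have hpos : 0 < l.length := List.length_pos_iff.2 hl
  simp only [CycRel, Set.mem_compl_iff]
  exact ⟨fun h h' => h hpos (h' hpos), fun h _ h' => h fun _ => h'⟩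

end CycRel

section Paths

variable {Q : Quiv}

lemma ptgt_append (v : Q.V) (l₁ l₂ : List Q.A) :
    ptgt Q (v, l₁ ++ l₂) = ptgt Q (ptgt Q (v, l₁), l₂) := by
  rcases List.eq_nil_or_concat l₂ with rfl | ⟨l, a, rfl⟩
  · simp [ptgt]
  · simp [ptgt, ← List.append_assoc]

lemma ptgt_cons (v : Q.V) (a : Q.A) (l : List Q.A) :
    ptgt Q (v, a :: l) = ptgt Q (Q.tgt a, l) :=
  ptgt_append v [a] l

lemma ok_append_iff (v : Q.V) (l₁ l₂ : List Q.A) :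
    Ok Q (v, l₁ ++ l₂) ↔ Ok Q (v, l₁) ∧ Ok Q (ptgt Q (v, l₁), l₂) := by
  unfold Ok List.Chain'
  rw [List.isChain_append]
  rcases List.eq_nil_or_concat l₁ with rfl | ⟨l, a, rfl⟩
  · simp [ptgt]
  · simp only [List.concat_eq_append]
    have hhead : ((l ++ [a]) ++ l₂).head? = (l ++ [a]).head? := by cases l <;> rfl
    simp only [hhead, ptgt, List.getLast?_concat, Option.elim, Option.mem_def,
      Option.some.injEq, forall_eq']
    constructor
    · rintro ⟨⟨h₁, h₂, h₃⟩, h₄⟩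
      exact ⟨⟨h₁, h₄⟩, h₂, fun y hy => (h₃ y hy).symm⟩
    · rintro ⟨⟨h₁, h₄⟩, h₂, h₃⟩
      exact ⟨⟨h₁, h₂, fun y hy => (h₃ y hy).symm⟩, h₄⟩

lemma ok_cons_iff (v : Q.V) (a : Q.A) (l : List Q.A) :
    Ok Q (v, a :: l) ↔ Q.src a = v ∧ Ok Q (Q.tgt a, l) := by
  rw [← List.singleton_append, ok_append_iff]
  simp [Ok, ptgt, List.Chain']

end Paths

section ClosedPaths

variable {Q : Quiv} {R : Set (Q.A × Q.A)}

def IsClosedPath (Q : Quiv) (w : PathDat Q) : Prop := Ok Q w ∧ ptgt Q w = psrc Q w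

lemma rotP_snd (w : PathDat Q) : (rotP Q w).2 = w.2.rotate (w.2.length - 1) := by
  obtain ⟨v, l⟩ := w
  rcases List.eq_nil_or_concat l with rfl | ⟨l, a, rfl⟩
  · rfl
  · simp [rotP, List.rotate_append_length_eq]

lemma length_rotP (w : PathDat Q) : (rotP Q w).2.length = w.2.length := by
  rw [rotP_snd, List.length_rotate]

lemma isClosedPath_rotP {w : PathDat Q} (hw : IsClosedPath Q w) : IsClosedPath Q (rotP Q w) := by
  obtain ⟨v, l⟩ := w
  rcases List.eq_nil_or_concat l with rfl | ⟨l, a, rfl⟩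
  · exact hw
  obtain ⟨hok, hcl⟩ := hw
  simp only [List.concat_eq_append, ptgt_append, psrc] at hok hcl ⊢
  rw [ok_append_iff, ok_cons_iff] at hok
  have hsrc : Q.src a = ptgt Q (v, l) := hok.2.1
  have htgt : Q.tgt a = v := by simpa [ptgt] using hcl
  simp only [rotP, List.getLast?_concat, List.dropLast_concat]
  refine ⟨(ok_cons_iff _ _ _).2 ⟨rfl, htgt ▸ hok.1⟩, ?_⟩
  rw [ptgt_cons, htgt, psrc, hsrc]

lemma exists_rotP_eq {w : PathDat Q} (hw : IsClosedPath Q w) :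
    ∃ w₀, IsClosedPath Q w₀ ∧ rotP Q w₀ = w := by
  obtain ⟨v, l⟩ := w
  rcases l with _ | ⟨a, l⟩
  · exact ⟨_, hw, rfl⟩
  obtain ⟨hok, hcl⟩ := hw
  rw [ok_cons_iff] at hok
  refine ⟨(Q.tgt a, l ++ [a]), ⟨?_, by simp [ptgt, psrc]⟩, ?_⟩
  · rw [ok_append_iff, ok_cons_iff]
    exact ⟨hok.2, by rw [← ptgt_cons v, hcl, psrc, hok.1], by simp [Ok, List.Chain']⟩
  · simp [rotP, hok.1]

lemma eq_of_ok_of_snd_eq {w w' : PathDat Q} (hw : Ok Q w) (hw' : Ok Q w') (h : w.2 = w'.2)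
    (hne : w.2 ≠ []) : w = w' := by
  obtain ⟨v, l⟩ := w
  obtain ⟨v', l'⟩ := w'
  obtain rfl : l = l' := h
  obtain ⟨a, l, rfl⟩ := List.exists_cons_of_ne_nil hne
  rw [ok_cons_iff] at hw hw'
  rw [← hw.1, ← hw'.1]

lemma rotI_succ (n : ℕ) (w : PathDat Q) : rotI Q (n + 1) w = rotP Q (rotI Q n w) :=
  Function.iterate_succ_apply' _ _ _

lemma rotI_length_self {w : PathDat Q} (hw : IsClosedPath Q w) : rotI Q w.2.length w = w := by
  have hrot : ∀ n, IsClosedPath Q (rotI Q n w) ∧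
      (rotI Q n w).2 = w.2.rotate (n * (w.2.length - 1)) := by
    intro n
    induction n with
    | zero => exact ⟨hw, by simp [rotI]⟩
    | succ n ih =>
      rw [rotI_succ]
      refine ⟨isClosedPath_rotP ih.1, ?_⟩
      rw [rotP_snd, ih.2, List.length_rotate, List.rotate_rotate, Nat.succ_mul]
  rcases eq_or_ne w.2 [] with hnil | hne
  · simp [hnil, rotI]
  refine eq_of_ok_of_snd_eq (hrot _).1.1 hw.1 ?_ (by rwa [(hrot _).2, Ne, List.rotate_eq_nil_iff])
  rw [(hrot _).2, List.rotate_length_mul]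

lemma RotEquiv.rotP_left {p c : PathDat Q} (h : RotEquiv Q p c) (hp : IsClosedPath Q p) :
    RotEquiv Q (rotP Q p) c := by
  obtain ⟨i, rfl⟩ := h
  refine ⟨i + (p.2.length - 1), ?_⟩
  rw [rotI, Function.iterate_add_apply, ← rotI, ← rotI]
  congr 1
  rcases Nat.eq_zero_or_pos p.2.length with h0 | hpos
  · obtain ⟨v, l⟩ := p
    obtain rfl : l = [] := List.length_eq_zero_iff.1 h0
    rfl
  · rw [rotI, ← Function.iterate_succ_apply, Nat.succ_eq_add_one, Nat.sub_add_cancel hpos,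
      ← rotI, rotI_length_self hp]

lemma cycRel_rotP_succ (w : PathDat Q) (i : ℕ) :
    CycRel R (rotP Q w).2 (i + 1) ↔ CycRel R w.2 i := by
  rw [rotP_snd, cycRel_rotate]
  rcases Nat.eq_zero_or_pos w.2.length with h0 | hpos
  · simp [CycRel, h0]
  · rw [Nat.add_assoc, Nat.add_sub_cancel' hpos, cycRel_add_length]

lemma isMixed_rotP_iff (w : PathDat Q) : IsMixed R (rotP Q w).2 ↔ IsMixed R w.2 := by
  rw [rotP_snd, isMixed_rotate_iff]

lemma RotEquiv.isMixed_iff {p c : PathDat Q} (h : RotEquiv Q p c) :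
    IsMixed R p.2 ↔ IsMixed R c.2 := by
  obtain ⟨i, rfl⟩ := h
  induction i with
  | zero => rfl
  | succ i ih => rw [ih, rotI_succ, isMixed_rotP_iff]

end ClosedPaths

section Cuts

variable {Q : Quiv} {R : Set (Q.A × Q.A)}

def cut (Q : Quiv) (w : PathDat Q) (n : ℕ) : PathDat Q × PathDat Q :=
  ((ptgt Q (w.1, w.2.take n), w.2.drop n), (w.1, w.2.take n))

lemma concatP_cut (w : PathDat Q) (n : ℕ) : concatP Q (cut Q w n) = w := by
  simp [cut, concatP]

lemma cut_concatP {m : ℕ} {x : PathDat Q × PathDat Q} (hx : BGmem Q R m x) :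
    cut Q (concatP Q x) m = x := by
  obtain ⟨⟨u, as⟩, ⟨v, gs⟩⟩ := x
  obtain ⟨-, -, hlen, hu, -⟩ := hx
  simp only [plen] at hlen
  subst hlen
  change u = ptgt Q (v, gs) at hu
  simp only [cut, concatP, List.take_left', List.drop_left', hu]

lemma isClosedPath_concatP {m : ℕ} {x : PathDat Q × PathDat Q} (hx : BGmem Q R m x) :
    IsClosedPath Q (concatP Q x) := by
  obtain ⟨⟨u, as⟩, ⟨v, gs⟩⟩ := x
  obtain ⟨⟨hα, -⟩, ⟨hγ, -⟩, -, hu, hv⟩ := hx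
  change u = ptgt Q (v, gs) at hu
  refine ⟨(ok_append_iff _ _ _).2 ⟨hγ, hu ▸ hα⟩, ?_⟩
  rw [concatP, ptgt_append, ← hu]
  exact hv

lemma bgmem_cut_iff {w : PathDat Q} {m : ℕ} (hw : IsClosedPath Q w) :
    BGmem Q R m (cut Q w m) ↔ CutValid (CycRel R w.2) w.2.length m := by
  obtain ⟨v, l⟩ := w
  have hok : Ok Q (v, l.take m) ∧ Ok Q (ptgt Q (v, l.take m), l.drop m) := by
    rw [← ok_append_iff, List.take_append_drop]
    exact hw.1
  have hanti : AntiPar Q (cut Q (v, l) m).1 (cut Q (v, l) m).2 := by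
    refine ⟨rfl, ?_⟩
    change ptgt Q (ptgt Q (v, l.take m), l.drop m) = v
    rw [← ptgt_append, List.take_append_drop]
    exact hw.2
  simp only [BGmem, InB, InG, cut, plen, List.length_take, CutValid]
  constructor
  · rintro ⟨⟨-, hB⟩, ⟨-, hG⟩, hlen, -⟩
    have hm : m ≤ l.length := by omega
    exact ⟨hm, (isChain_take_iff hm).1 hG, isChain_drop_iff.1 hB⟩
  · rintro ⟨hm, hG, hB⟩
    exact ⟨⟨hok.2, isChain_drop_iff.2 hB⟩, ⟨hok.1, (isChain_take_iff hm).2 hG⟩, by omega,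
      hanti⟩

lemma d1raw_cut {w : PathDat Q} {n : ℕ} (hw : Ok Q w) (hn : n < w.2.length) :
    d1raw Q (cut Q w (n + 1)) = cut Q w n := by
  obtain ⟨v, l⟩ := w
  have hl : l = l.take n ++ l[n] :: l.drop (n + 1) := by
    rw [← List.drop_eq_getElem_cons, List.take_append_drop]
  have hsrc : Q.src l[n] = ptgt Q (v, l.take n) := by
    rw [hl, ok_append_iff, ok_cons_iff] at hw
    exact hw.2.1
  rw [cut, cut, List.take_succ_eq_append_getElem hn, List.drop_eq_getElem_cons hn]
  simp only [d1raw, List.getLast?_concat, List.dropLast_concat, hsrc]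

lemma d2raw_cut_rotP {w : PathDat Q} {n : ℕ} (hw : IsClosedPath Q w) (hn : n < w.2.length) :
    d2raw Q (cut Q (rotP Q w) (n + 1)) = cut Q w n := by
  obtain ⟨v, l⟩ := w
  rcases List.eq_nil_or_concat l with rfl | ⟨l, a, rfl⟩
  · simp at hn
  simp only [List.concat_eq_append, List.length_append, List.length_singleton] at hn
  have htgt : Q.tgt a = v := by simpa [ptgt, psrc] using hw.2
  simp [cut, rotP, d2raw, ptgt_cons, htgt, List.take_append_of_le_length (Nat.lt_succ_iff.1 hn),
    List.drop_append_of_le_length (Nat.lt_succ_iff.1 hn)]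

end Cuts

section Homotopy

variable {k : Type} [Field k] {Q : Quiv} {R : Set (Q.A × Q.A)}

lemma bw_of_bgmem {m : ℕ} {x : PathDat Q × PathDat Q} (h : BGmem Q R m x) :
    bw k Q R m x = Finsupp.single ⟨x, h⟩ 1 :=
  dif_pos h

lemma bw_of_not_bgmem {m : ℕ} {x : PathDat Q × PathDat Q} (h : ¬ BGmem Q R m x) :
    bw k Q R m x = 0 :=
  dif_neg h

lemma bgmem_cut_iff_rotP {w : PathDat Q} {m : ℕ} (hw : IsClosedPath Q w) :
    BGmem Q R m (cut Q w m) ↔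
      CutValid (fun i => CycRel R (rotP Q w).2 (i + 1)) (rotP Q w).2.length m := by
  simp only [bgmem_cut_iff hw, cycRel_rotP_succ, length_rotP]

lemma bd_bw_cut_rotP {w : PathDat Q} {n : ℕ} (hw : IsClosedPath Q w)
    (hx : BGmem Q R (n + 1) (cut Q (rotP Q w) (n + 1))) :
    bd k Q R n (bw k Q R (n + 1) (cut Q (rotP Q w) (n + 1))) =
      bw k Q R n (cut Q (rotP Q w) n) + (-1 : k) ^ (n + 1) • bw k Q R n (cut Q w n) := by
  have hn : n < w.2.length := by
    have := ((bgmem_cut_iff (isClosedPath_rotP hw)).1 hx).1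
    rw [length_rotP] at this
    omega
  rw [bw_of_bgmem hx, bd, Finsupp.linearCombination_single, one_smul, bdB,
    d1raw_cut (isClosedPath_rotP hw).1 (by rwa [length_rotP]), d2raw_cut_rotP hw hn]

/-- The contracting homotopy `(a α', γ) ↦ ± (α', γ a)`: rotate the closed path `α γ` by one
arrow and cut it one arrow later. -/
noncomputable def homotopy (k : Type) [Field k] (Q : Quiv) (R : Set (Q.A × Q.A)) (m : ℕ) :
    Chn k Q R m →ₗ[k] Chn k Q R (m + 1) :=
  Finsupp.linearCombination k fun x =>
    (-1 : k) ^ (m + 1) • bw k Q R (m + 1) (cut Q (rotP Q (concatP Q x.val)) (m + 1))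

lemma homotopy_single {m : ℕ} (x : BGt Q R m) :
    homotopy k Q R m (Finsupp.single x 1) =
      (-1 : k) ^ (m + 1) • bw k Q R (m + 1) (cut Q (rotP Q (concatP Q x.val)) (m + 1)) := by
  rw [homotopy, Finsupp.linearCombination_single, one_smul]

lemma homotopy_bw_cut {w : PathDat Q} {m : ℕ} (hx : BGmem Q R m (cut Q w m)) :
    homotopy k Q R m (bw k Q R m (cut Q w m)) =
      (-1 : k) ^ (m + 1) • bw k Q R (m + 1) (cut Q (rotP Q w) (m + 1)) := by
  rw [bw_of_bgmem hx, homotopy_single, concatP_cut]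

lemma bd_homotopy_bw_cut_zero {w : PathDat Q} (hw : IsClosedPath Q w) (hmix : IsMixed R w.2)
    (hx : BGmem Q R 0 (cut Q w 0)) :
    bd k Q R 0 (homotopy k Q R 0 (bw k Q R 0 (cut Q w 0))) = bw k Q R 0 (cut Q w 0) := by
  obtain ⟨hall, hnone⟩ := ((isMixed_rotP_iff w).2 hmix).not_forall_lt
  obtain ⟨h₁, h₀⟩ := cutValid_one_of_cutValid_zero hall hnone ((bgmem_cut_iff_rotP hw).1 hx)
  have hw' := isClosedPath_rotP hw
  rw [homotopy_bw_cut hx, map_smul, bd_bw_cut_rotP hw ((bgmem_cut_iff hw').2 h₁),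
    bw_of_not_bgmem (mt (bgmem_cut_iff hw').1 h₀)]
  simp

lemma bgmem_cut_iff_rotP_rotP {w : PathDat Q} {m : ℕ} (hw : IsClosedPath Q w) :
    BGmem Q R m (cut Q w m) ↔
      CutValid (fun i => CycRel R (rotP Q (rotP Q w)).2 (i + 2))
        (rotP Q (rotP Q w)).2.length m := by
  simp only [bgmem_cut_iff hw, cycRel_rotP_succ, length_rotP]

lemma bgmem_cut_iff_not_bgmem_cut_rotP_rotP {w : PathDat Q} {n : ℕ} (hw : IsClosedPath Q w)
    (hx : BGmem Q R (n + 1) (cut Q (rotP Q w) (n + 1))) :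
    BGmem Q R n (cut Q w n) ↔ ¬ BGmem Q R (n + 2) (cut Q (rotP Q (rotP Q w)) (n + 2)) := by
  have hw' := isClosedPath_rotP hw
  rw [bgmem_cut_iff_rotP hw'] at hx
  rw [bgmem_cut_iff_rotP_rotP hw, bgmem_cut_iff (isClosedPath_rotP hw')]
  exact cutValid_add_two_iff (by simpa using cycRel_add_length (R := R) (i := 0)) hx

lemma bgmem_cut_rotP_rotP_iff_bgmem_cut_rotP {w : PathDat Q} {n : ℕ} (hw : IsClosedPath Q w)
    (hmix : IsMixed R w.2) (hx : BGmem Q R (n + 1) (cut Q (rotP Q w) (n + 1)))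
    (h : BGmem Q R (n + 1) (cut Q (rotP Q (rotP Q w)) (n + 1))) :
    BGmem Q R (n + 2) (cut Q (rotP Q (rotP Q w)) (n + 2)) ↔ BGmem Q R n (cut Q (rotP Q w) n) := by
  have hw' := isClosedPath_rotP hw
  obtain ⟨hall, hnone⟩ := ((isMixed_rotP_iff _).2 ((isMixed_rotP_iff w).2 hmix)).not_forall_lt
  rw [bgmem_cut_iff_rotP hw'] at hx ⊢
  rw [bgmem_cut_iff (isClosedPath_rotP hw')] at h ⊢
  exact cutValid_add_two_iff_of_cutValid hall hnone hx h

lemma bd_homotopy_add_homotopy_bd_bw_cut {w : PathDat Q} {n : ℕ} (hw : IsClosedPath Q w)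
    (hmix : IsMixed R w.2) (hx : BGmem Q R (n + 1) (cut Q (rotP Q w) (n + 1))) :
    bd k Q R (n + 1) (homotopy k Q R (n + 1) (bw k Q R (n + 1) (cut Q (rotP Q w) (n + 1)))) +
        homotopy k Q R n (bd k Q R n (bw k Q R (n + 1) (cut Q (rotP Q w) (n + 1)))) =
      bw k Q R (n + 1) (cut Q (rotP Q w) (n + 1)) := by
  -- for `x = (a α', γ)`: exactly one of `h x` and the second boundary term `(r2(γ) α, r1(γ))`
  -- of `x` is a basis element
  have hcov := bgmem_cut_iff_not_bgmem_cut_rotP_rotP hw hx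
  -- and the term `(α' l1(γ), l2(γ) a)` shared by `d h x` and `h d x` occurs in both or neither
  have hmid := bgmem_cut_rotP_rotP_iff_bgmem_cut_rotP hw hmix hx
  have hsign : (-1 : k) ^ (n + 1 + 1) = - (-1) ^ (n + 1) := by rw [pow_succ, mul_neg_one]
  have hss : (-1 : k) ^ (n + 1) * (-1) ^ (n + 1) = 1 := pow_mul_pow_eq_one _ (by norm_num)
  rw [homotopy_bw_cut hx, bd_bw_cut_rotP hw hx, map_smul, map_add, map_smul, hsign]
  by_cases h₂ : BGmem Q R (n + 2) (cut Q (rotP Q (rotP Q w)) (n + 2))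
  · rw [bd_bw_cut_rotP (isClosedPath_rotP hw) h₂, bw_of_not_bgmem (fun h => hcov.1 h h₂),
      map_zero, smul_zero, add_zero, hsign]
    by_cases h₁ : BGmem Q R n (cut Q (rotP Q w) n)
    · rw [homotopy_bw_cut h₁]
      linear_combination (norm := module) hss • bw k Q R (n + 1) (cut Q (rotP Q w) (n + 1))
    · rw [bw_of_not_bgmem h₁, map_zero, bw_of_not_bgmem (fun h => h₁ ((hmid h).1 h₂))]
      linear_combination (norm := module) hss • bw k Q R (n + 1) (cut Q (rotP Q w) (n + 1))
  · have h₁ : homotopy k Q R n (bw k Q R n (cut Q (rotP Q w) n)) = 0 := by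
      by_cases h₁ : BGmem Q R n (cut Q (rotP Q w) n)
      · rw [homotopy_bw_cut h₁, bw_of_not_bgmem (fun h => h₂ ((hmid h).2 h₁)), smul_zero]
      · rw [bw_of_not_bgmem h₁, map_zero]
    rw [bw_of_not_bgmem h₂, map_zero, smul_zero, zero_add, h₁, zero_add,
      homotopy_bw_cut (hcov.2 h₂), smul_smul, hss, one_smul]

end Homotopy

section Subcomplex

variable {k : Type} [Field k] {Q : Quiv} {R : Set (Q.A × Q.A)}

lemma IsCycle.ok_powP_two {c : PathDat Q} (hc : IsCycle Q c) : Ok Q (powP Q c 2) := by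
  obtain ⟨hok, -, hcl⟩ := hc
  simp only [powP, powL, List.append_nil, ok_append_iff]
  exact ⟨hok, by rw [← hcl]; exact hok⟩

lemma IsCycle.isMixed {c : PathDat Q} (hc : IsCycle Q c) (hcomp : ¬ Complete Q R c)
    (hcocomp : ¬ Cocomplete Q R c) : IsMixed R c.2 := by
  have hsq : ∀ {S : Set (Q.A × Q.A)}, (∀ i, CycRel S c.2 i) →
      (powP Q c 2).2.IsChain (fun a b => (a, b) ∈ S) := fun h => by
    simpa [powP, powL] using isChain_append_self hc.2.1 h
  refine ⟨?_, ?_⟩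
  · by_contra h
    simp only [not_exists] at h
    exact hcocomp ⟨hc, hc.ok_powP_two, hsq fun i => (cycRel_compl_iff hc.2.1).2 (h i)⟩
  · by_contra h
    simp only [not_exists, not_not] at h
    exact hcomp ⟨hc, hc.ok_powP_two, hsq h⟩

lemma exists_eq_cut_rotP {m : ℕ} (x : BGt Q R m) :
    ∃ w, IsClosedPath Q w ∧ rotP Q w = concatP Q x.val ∧ x.val = cut Q (rotP Q w) m := by
  obtain ⟨w, hw, hrot⟩ := exists_rotP_eq (isClosedPath_concatP x.2)
  exact ⟨w, hw, hrot, by rw [hrot, cut_concatP x.2]⟩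

lemma single_eq_bw {m : ℕ} (x : BGt Q R m) : Finsupp.single x (1 : k) = bw k Q R m x.val :=
  (bw_of_bgmem x.2).symm

lemma bw_mem_wsp {c : PathDat Q} {m : ℕ} {y : PathDat Q × PathDat Q}
    (hy : RotEquiv Q (concatP Q y) c) : bw k Q R m y ∈ Wsp k Q R c m := by
  by_cases h : BGmem Q R m y
  · rw [bw_of_bgmem h]
    exact Submodule.subset_span ⟨⟨y, h⟩, hy, rfl⟩
  · rw [bw_of_not_bgmem h]
    exact zero_mem _

lemma wsp_le_eqLocus {V : Type} [AddCommGroup V] [Module k V] {c : PathDat Q} {m : ℕ}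
    {f g : Chn k Q R m →ₗ[k] V}
    (h : ∀ x : BGt Q R m, RotEquiv Q (concatP Q x.val) c →
      f (Finsupp.single x 1) = g (Finsupp.single x 1)) :
    Wsp k Q R c m ≤ LinearMap.eqLocus f g := by
  rw [Wsp, Submodule.span_le]
  rintro _ ⟨x, hx, rfl⟩
  exact h x hx

lemma homotopy_mem_wsp {c : PathDat Q} {m : ℕ} {z : Chn k Q R m} (hz : z ∈ Wsp k Q R c m) :
    homotopy k Q R m z ∈ Wsp k Q R c (m + 1) := by
  suffices Wsp k Q R c m ≤ (Wsp k Q R c (m + 1)).comap (homotopy k Q R m) from this hz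
  rw [Wsp, Submodule.span_le]
  rintro _ ⟨x, hx, rfl⟩
  rw [SetLike.mem_coe, Submodule.mem_comap, homotopy_single]
  exact Submodule.smul_mem _ _ (bw_mem_wsp (by
    rw [concatP_cut]; exact hx.rotP_left (isClosedPath_concatP x.2)))

lemma bd_homotopy_of_mem_wsp {c : PathDat Q} (hmix : IsMixed R c.2) {z : Chn k Q R 0}
    (hz : z ∈ Wsp k Q R c 0) : bd k Q R 0 (homotopy k Q R 0 z) = z := by
  refine wsp_le_eqLocus (f := bd k Q R 0 ∘ₗ homotopy k Q R 0) (g := LinearMap.id)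
    (fun x hx => ?_) hz
  have hxw := cut_concatP x.2
  rw [LinearMap.comp_apply, LinearMap.id_apply, single_eq_bw, ← hxw]
  exact bd_homotopy_bw_cut_zero (isClosedPath_concatP x.2) (hx.isMixed_iff.2 hmix) (hxw ▸ x.2)

lemma bd_homotopy_add_homotopy_bd_of_mem_wsp {c : PathDat Q} (hmix : IsMixed R c.2) {n : ℕ}
    {z : Chn k Q R (n + 1)} (hz : z ∈ Wsp k Q R c (n + 1)) :
    bd k Q R (n + 1) (homotopy k Q R (n + 1) z) + homotopy k Q R n (bd k Q R n z) = z := by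
  refine wsp_le_eqLocus (g := LinearMap.id)
    (f := bd k Q R (n + 1) ∘ₗ homotopy k Q R (n + 1) + homotopy k Q R n ∘ₗ bd k Q R n)
    (fun x hx => ?_) hz
  obtain ⟨w, hw, hrot, hxw⟩ := exists_eq_cut_rotP x
  have hmw : IsMixed R w.2 := by
    rw [← isMixed_rotP_iff, hrot]
    exact hx.isMixed_iff.2 hmix
  rw [LinearMap.add_apply, LinearMap.comp_apply, LinearMap.comp_apply, LinearMap.id_apply,
    single_eq_bw, hxw]
  exact bd_homotopy_add_homotopy_bd_bw_cut hw hmw (hxw ▸ x.2)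

lemma rotI_nil (i : ℕ) (e : Q.V) : rotI Q i (e, []) = (e, []) := by
  induction i with
  | zero => rfl
  | succ i ih => rw [rotI_succ, ih]; rfl

lemma rotEquiv_nil_iff {p : PathDat Q} {e : Q.V} : RotEquiv Q p (e, []) ↔ p = (e, []) := by
  refine ⟨fun ⟨i, hi⟩ => ?_, fun h => ⟨0, h⟩⟩
  have hlen : ∀ j, (rotI Q j p).2.length = p.2.length := fun j => by
    induction j with
    | zero => rfl
    | succ j ih => rw [rotI_succ, length_rotP, ih]
  obtain ⟨v, l⟩ := p
  obtain rfl : l = [] := List.length_eq_zero_iff.1 (by simpa [hi] using (hlen i).symm)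
  rwa [rotI_nil] at hi

lemma isClosedPath_nil (e : Q.V) : IsClosedPath Q (e, []) :=
  ⟨⟨List.isChain_nil, by simp⟩, rfl⟩

lemma wsp_nil_succ (e : Q.V) (m : ℕ) : Wsp k Q R (e, []) (m + 1) = ⊥ := by
  rw [eq_bot_iff, Wsp, Submodule.span_le]
  rintro _ ⟨x, hx, rfl⟩
  have hlen := congrArg (fun p : PathDat Q => p.2.length) (rotEquiv_nil_iff.1 hx)
  have hγ := x.2.2.2.1
  simp only [concatP, List.length_append, List.length_nil, plen] at hlen hγ
  omega

lemma wsp_nil_zero_le (e : Q.V) :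
    Wsp k Q R (e, []) 0 ≤ Submodule.span k {bw k Q R 0 ((e, []), (e, []))} := by
  rw [Wsp, Submodule.span_le]
  rintro _ ⟨x, hx, rfl⟩
  rw [SetLike.mem_coe, single_eq_bw, ← cut_concatP x.2, rotEquiv_nil_iff.1 hx]
  exact Submodule.mem_span_singleton_self _

lemma wz_le_wb_of_isMixed {c : PathDat Q} (hmix : IsMixed R c.2) (m : ℕ) :
    WZ k Q R c m ≤ WB k Q R c m := by
  intro z hz
  refine ⟨homotopy k Q R m z, homotopy_mem_wsp hz.2, ?_⟩
  cases m with
  | zero => exact bd_homotopy_of_mem_wsp hmix hz.2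
  | succ n =>
    have h := bd_homotopy_add_homotopy_bd_of_mem_wsp hmix hz.2
    rwa [show bd k Q R n z = 0 from hz.1, map_zero, add_zero] at h

lemma subHomSpannedBy_nil (e : Q.V) :
    SubHomSpannedBy k Q R (e, []) 0 (bw k Q R 0 ((e, []), (e, []))) := by
  have hv : BGmem Q R 0 ((e, []), (e, [])) :=
    (bgmem_cut_iff (isClosedPath_nil e)).2 ⟨le_rfl, by simp, by simp⟩
  refine ⟨⟨Submodule.mem_top, bw_mem_wsp ⟨0, rfl⟩⟩, ?_, fun z hz => ?_⟩
  · rw [WB, wsp_nil_succ, Submodule.map_bot, Submodule.mem_bot, bw_of_bgmem hv]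
    exact Finsupp.single_ne_zero.2 one_ne_zero
  · obtain ⟨t, rfl⟩ := Submodule.mem_span_singleton.1 (wsp_nil_zero_le e hz.2)
    exact ⟨t, by rw [sub_self]; exact zero_mem _⟩

lemma wz_nil_succ_le_wb (e : Q.V) (m : ℕ) :
    WZ k Q R (e, []) (m + 1) ≤ WB k Q R (e, []) (m + 1) := by
  rw [WZ, wsp_nil_succ, inf_bot_eq]
  exact bot_le

end Subcomplex

theorem homology_of_other_circuits_general (k : Type) [Field k] (Q : Quiv)
    (R : Set (Q.A × Q.A)) :
    (∀ c : PathDat Q, IsCycle Q c → ¬Complete Q R c → ¬Cocomplete Q R c →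
      ∀ m : ℕ, WZ k Q R c m ≤ WB k Q R c m) ∧
    (∀ e : Q.V,
      SubHomSpannedBy k Q R (e, []) 0 (bw k Q R 0 ((e, []), (e, []))) ∧
      ∀ m : ℕ, WZ k Q R (e, []) (m + 1) ≤ WB k Q R (e, []) (m + 1)) :=
  ⟨fun _ hc hcomp hcocomp => wz_le_wb_of_isMixed (hc.isMixed hcomp hcocomp),
    fun e => ⟨subHomSpannedBy_nil e, wz_nil_succ_le_wb e⟩⟩

/-- Let `(Q, R)` be a quadratic monomial presentation. For
every circuit `C` (given by a cycle `c`) that is neither complete nor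
cocomplete, the subcomplex `k(B ⊙ Γ)_C` is exact in all degrees. For a vertex
`e`, the homology of `k(B ⊙ Γ)_{e}` is one-dimensional, concentrated in degree
`0` and spanned by `(e, e)`. -/
theorem homology_of_other_circuits (k : Type) [Field k] (Q : Quiv)
    (R : Set (Q.A × Q.A)) (hq : IsQuadMon Q R) :
    (∀ c : PathDat Q, IsCycle Q c → ¬Complete Q R c → ¬Cocomplete Q R c →
      ∀ m : ℕ, WZ k Q R c m ≤ WB k Q R c m) ∧
    (∀ e : Q.V,
      SubHomSpannedBy k Q R (e, []) 0 (bw k Q R 0 ((e, []), (e, []))) ∧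
      ∀ m : ℕ, WZ k Q R (e, []) (m + 1) ≤ WB k Q R (e, []) (m + 1)) :=
  homology_of_other_circuits_general k Q R

end GentleTT
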